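/- Let φ ∈ Φ. Then the following two properties are equivalent: (i) for every (τ,z,w(·)) ∈ G with τ < ϑ, every continuously differentiable ψ : ℝ × ℝ^n → ℝ and every δ > 0, if φ(τ,z,w(·)) − ψ(τ,z) ≤ φ(t,x,κ_t(·)) − ψ(t,x) for all (t,x) ∈ O⁺_δ(τ,z), where κ(·) ∈ Λ₀(τ,z,w(·)), then ∂ψ(τ,z)/∂τ + H(τ,z,w(·), ∇_z ψ(τ,z)) ≤ 0; (ii) for every (τ,z,w(·)) ∈ G with τ < ϑ, one has p0 + H(τ,z,w(·), p) ≤ 0 for all (p0,p) ∈ D⁻φ(τ,z,w(·)). -/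

import Mathlib

noncomputable section

open MeasureTheory Set Filter Topology Asymptotics RealInnerProductSpace
open scoped NNReal

namespace DGPaper

abbrev E (n : ℕ) : Type := EuclideanSpace ℝ (Fin n)

variable {n l m : ℕ}

/-- `x` is piecewise continuous on `[a,b)` (equivalently `[a,b]`, the value at `b` being free):
there is a finite partition `a = ξ₀ < ξ₁ < … = b` such that `x` is continuous on each
`[ξ i, ξ (i+1))` and has a finite left limit at each `ξ (i+1)`. -/
def PCOn (x : ℝ → E n) (a b : ℝ) : Prop :=
  ∃ k : ℕ, ∃ ξ : Fin (k + 2) → ℝ, StrictMono ξ ∧ ξ 0 = a ∧ ξ (Fin.last (k + 1)) = b ∧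
    ∀ i : Fin (k + 1), ContinuousOn x (Ico (ξ i.castSucc) (ξ i.succ)) ∧
      ∃ L : E n, Tendsto x (𝓝[<] ξ i.succ) (𝓝 L)

/-- membership in the space `PC = PC([-h,0), ℝⁿ)`. -/
def PCh (h : ℝ) (w : ℝ → E n) : Prop := PCOn w (-h) 0

/-- `‖w‖₁ = ∫_{-h}^0 ‖w ξ‖ dξ`. -/
def norm1 (h : ℝ) (w : ℝ → E n) : ℝ := ∫ ξ in (-h)..(0:ℝ), ‖w ξ‖

/-- `‖w‖_∞ = sup_{ξ ∈ [-h,0)} ‖w ξ‖`. -/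
def normInf (h : ℝ) (w : ℝ → E n) : ℝ := sSup ((fun ξ => ‖w ξ‖) '' Ico (-h) (0 : ℝ))

/-- `(z, w) ∈ P(α)`. -/
def memP (h α : ℝ) (z : E n) (w : ℝ → E n) : Prop := PCh h w ∧ ‖z‖ ≤ α ∧ normInf h w ≤ α

/-- the history segment `x_t(ξ) = x (t + ξ)`. -/
def seg (x : ℝ → E n) (t : ℝ) : ℝ → E n := fun ξ => x (t + ξ)

/-- the constant right extension `κ(·)` of `(τ, z, w)`, i.e. the unique element of
`Λ₀(τ,z,w(·))`. -/
def ext0 (τ : ℝ) (z : E n) (w : ℝ → E n) : ℝ → E n := fun t => if t < τ then w (t - τ) else z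

/-- the set `Λ(τ,z,w(·))` of Lipschitz right extensions. -/
def Lam (ϑ h τ : ℝ) (z : E n) (w : ℝ → E n) : Set (ℝ → E n) :=
  {x | PCOn x (τ - h) ϑ ∧ x τ = z ∧ (∀ t ∈ Ico (τ - h) τ, x t = w (t - τ)) ∧
    ∃ K : ℝ≥0, LipschitzOnWith K x (Icc τ ϑ)}

/-- membership in the class `Φ`. -/
def InPhi (t0 ϑ h : ℝ) (φ : ℝ → E n → (ℝ → E n) → ℝ) : Prop :=
  (∀ (z : E n) (w : ℝ → E n), PCh h w → ContinuousOn (fun τ => φ τ z w) (Icc t0 ϑ)) ∧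
  ∀ α > (0 : ℝ), ∃ lφ > (0 : ℝ), ∀ τ ∈ Icc t0 ϑ, ∀ (z z' : E n) (w w' : ℝ → E n),
    memP h α z w → memP h α z' w' →
    |φ τ z w - φ τ z' w'| ≤ lφ * (‖z - z'‖ + norm1 h (fun ξ => w ξ - w' ξ))

/-- condition (C1). -/
def CondC1 (t0 ϑ h : ℝ) (f : ℝ → E n → (ℝ → E n) → E l → E m → E n)
    (f0 : ℝ → E n → (ℝ → E n) → E l → E m → ℝ) : Prop :=
  ∀ (x : E n) (r : ℝ → E n), PCh h r →
    ContinuousOn (fun p : ℝ × E l × E m => f p.1 x r p.2.1 p.2.2)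
      (Icc t0 ϑ ×ˢ (univ : Set (E l × E m))) ∧
    ContinuousOn (fun p : ℝ × E l × E m => f0 p.1 x r p.2.1 p.2.2)
      (Icc t0 ϑ ×ˢ (univ : Set (E l × E m)))

/-- condition (C2). -/
def CondC2 (t0 ϑ h : ℝ) (U : Set (E l)) (V : Set (E m))
    (f : ℝ → E n → (ℝ → E n) → E l → E m → E n)
    (f0 : ℝ → E n → (ℝ → E n) → E l → E m → ℝ) : Prop :=
  ∃ cf > (0 : ℝ), ∀ t ∈ Icc t0 ϑ, ∀ (x : E n) (r : ℝ → E n), PCh h r →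
    ∀ u ∈ U, ∀ v ∈ V,
      ‖f t x r u v‖ + |f0 t x r u v| ≤ cf * (1 + ‖x‖ + norm1 h r + ‖r (-h)‖)

/-- condition (C3). -/
def CondC3 (t0 ϑ h : ℝ) (U : Set (E l)) (V : Set (E m))
    (f : ℝ → E n → (ℝ → E n) → E l → E m → E n)
    (f0 : ℝ → E n → (ℝ → E n) → E l → E m → ℝ) : Prop :=
  ∀ α > (0 : ℝ), ∃ lf > (0 : ℝ), ∀ t ∈ Icc t0 ϑ, ∀ (x x' : E n) (r r' : ℝ → E n),
    memP h α x r → memP h α x' r' → ∀ u ∈ U, ∀ v ∈ V,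
      ‖f t x r u v - f t x' r' u v‖ + |f0 t x r u v - f0 t x' r' u v| ≤
        lf * (‖x - x'‖ + norm1 h (fun ξ => r ξ - r' ξ) + ‖r (-h) - r' (-h)‖)

/-- the Hamiltonian `H`. -/
def Ham (U : Set (E l)) (V : Set (E m))
    (f : ℝ → E n → (ℝ → E n) → E l → E m → E n)
    (f0 : ℝ → E n → (ℝ → E n) → E l → E m → ℝ)
    (τ : ℝ) (z : E n) (w : ℝ → E n) (s : E n) : ℝ :=
  ⨅ u : U, ⨆ v : V, (⟪f τ z w u v, s⟫ + f0 τ z w u v)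

/-- condition (C4), Isaacs' condition. -/
def CondC4 (t0 ϑ h : ℝ) (U : Set (E l)) (V : Set (E m))
    (f : ℝ → E n → (ℝ → E n) → E l → E m → E n)
    (f0 : ℝ → E n → (ℝ → E n) → E l → E m → ℝ) : Prop :=
  ∀ t ∈ Icc t0 ϑ, ∀ (x : E n) (r : ℝ → E n), PCh h r → ∀ s : E n,
    (⨅ u : U, ⨆ v : V, (⟪f t x r u v, s⟫ + f0 t x r u v)) =
    (⨆ v : V, ⨅ u : U, (⟪f t x r u v, s⟫ + f0 t x r u v))

/-- condition (C5). -/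
def CondC5 (h : ℝ) (σ : E n → (ℝ → E n) → ℝ) : Prop :=
  ∀ α > (0 : ℝ), ∃ ls > (0 : ℝ), ∀ (x x' : E n) (r r' : ℝ → E n),
    memP h α x r → memP h α x' r' →
    |σ x r - σ x' r'| ≤ ls * (‖x - x'‖ + norm1 h (fun ξ => r ξ - r' ξ))

/-- the set of admissible control realizations on `[τ, ϑ]` with values in `U`. -/
def Ctrl (ϑ τ : ℝ) {d : ℕ} (U : Set (E d)) : Set (ℝ → E d) :=
  {u | Measurable u ∧ ∀ t ∈ Icc τ ϑ, u t ∈ U}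

/-- `x(·)` is the motion of the delay system generated from the initial position `(τ,z,w(·))`
by the control realizations `u(·)`, `v(·)`. -/
def IsMotion (ϑ h : ℝ) (f : ℝ → E n → (ℝ → E n) → E l → E m → E n)
    (τ : ℝ) (z : E n) (w : ℝ → E n) (u : ℝ → E l) (v : ℝ → E m) (x : ℝ → E n) : Prop :=
  x τ = z ∧ (∀ t ∈ Ico (τ - h) τ, x t = w (t - τ)) ∧ PCOn x (τ - h) ϑ ∧
  (∃ K : ℝ≥0, LipschitzOnWith K x (Icc τ ϑ)) ∧
  ∀ᵐ t ∂(volume : Measure ℝ), t ∈ Icc τ ϑ → HasDerivAt x (f t (x t) (seg x t) (u t) (v t)) t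

/-- `X` assigns to initial data and controls the unique generated motion. -/
def MotionMap (t0 ϑ h : ℝ) (U : Set (E l)) (V : Set (E m))
    (f : ℝ → E n → (ℝ → E n) → E l → E m → E n)
    (X : ℝ → E n → (ℝ → E n) → (ℝ → E l) → (ℝ → E m) → ℝ → E n) : Prop :=
  ∀ τ ∈ Icc t0 ϑ, ∀ (z : E n) (w : ℝ → E n), PCh h w →
    ∀ u ∈ Ctrl ϑ τ U, ∀ v ∈ Ctrl ϑ τ V,
      IsMotion ϑ h f τ z w u v (X τ z w u v) ∧
      ∀ x' : ℝ → E n, IsMotion ϑ h f τ z w u v x' → EqOn x' (X τ z w u v) (Icc (τ - h) ϑ)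

/-- the quality index `γ` along a motion. -/
def cost (ϑ : ℝ) (f0 : ℝ → E n → (ℝ → E n) → E l → E m → ℝ) (σ : E n → (ℝ → E n) → ℝ)
    (τ : ℝ) (x : ℝ → E n) (u : ℝ → E l) (v : ℝ → E m) : ℝ :=
  σ (x ϑ) (seg x ϑ) + ∫ t in τ..ϑ, f0 t (x t) (seg x t) (u t) (v t)

/-- non-anticipative strategy of the first player. -/
def Nonant1 (ϑ τ : ℝ) (U : Set (E l)) (V : Set (E m)) (Q : (ℝ → E m) → ℝ → E l) : Prop :=
  (∀ v ∈ Ctrl ϑ τ V, Q v ∈ Ctrl ϑ τ U) ∧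
  ∀ v ∈ Ctrl ϑ τ V, ∀ v' ∈ Ctrl ϑ τ V, ∀ t ∈ Icc τ ϑ,
    (∀ᵐ ξ ∂(volume : Measure ℝ), ξ ∈ Icc τ t → v ξ = v' ξ) →
    (∀ᵐ ξ ∂(volume : Measure ℝ), ξ ∈ Icc τ t → Q v ξ = Q v' ξ)

/-- non-anticipative strategy of the second player. -/
def Nonant2 (ϑ τ : ℝ) (U : Set (E l)) (V : Set (E m)) (Q : (ℝ → E l) → ℝ → E m) : Prop :=
  (∀ u ∈ Ctrl ϑ τ U, Q u ∈ Ctrl ϑ τ V) ∧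
  ∀ u ∈ Ctrl ϑ τ U, ∀ u' ∈ Ctrl ϑ τ U, ∀ t ∈ Icc τ ϑ,
    (∀ᵐ ξ ∂(volume : Measure ℝ), ξ ∈ Icc τ t → u ξ = u' ξ) →
    (∀ᵐ ξ ∂(volume : Measure ℝ), ξ ∈ Icc τ t → Q u ξ = Q u' ξ)

/-- the lower value functional `ρᵘ`. -/
def rhoU (ϑ : ℝ) (U : Set (E l)) (V : Set (E m))
    (f0 : ℝ → E n → (ℝ → E n) → E l → E m → ℝ) (σ : E n → (ℝ → E n) → ℝ)
    (X : ℝ → E n → (ℝ → E n) → (ℝ → E l) → (ℝ → E m) → ℝ → E n)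
    (τ : ℝ) (z : E n) (w : ℝ → E n) : ℝ :=
  ⨅ Q : {Q : (ℝ → E m) → ℝ → E l // Nonant1 ϑ τ U V Q},
    ⨆ v : Ctrl ϑ τ V, cost ϑ f0 σ τ (X τ z w (Q.1 v.1) v.1) (Q.1 v.1) v.1

/-- the upper value functional `ρᵛ`. -/
def rhoV (ϑ : ℝ) (U : Set (E l)) (V : Set (E m))
    (f0 : ℝ → E n → (ℝ → E n) → E l → E m → ℝ) (σ : E n → (ℝ → E n) → ℝ)
    (X : ℝ → E n → (ℝ → E n) → (ℝ → E l) → (ℝ → E m) → ℝ → E n)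
    (τ : ℝ) (z : E n) (w : ℝ → E n) : ℝ :=
  ⨆ Q : {Q : (ℝ → E l) → ℝ → E m // Nonant2 ϑ τ U V Q},
    ⨅ u : Ctrl ϑ τ U, cost ϑ f0 σ τ (X τ z w u.1 (Q.1 u.1)) u.1 (Q.1 u.1)

/-- the neighborhood `O⁺_δ(τ,z)`. -/
def Oplus (δ τ : ℝ) (z : E n) : Set (ℝ × E n) := {p | p.1 ∈ Icc τ (τ + δ) ∧ ‖p.2 - z‖ ≤ δ}

/-- the terminal condition `φ(ϑ,z,w(·)) = σ(z,w(·))`. -/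
def TerminalCond (ϑ h : ℝ) (σ : E n → (ℝ → E n) → ℝ) (φ : ℝ → E n → (ℝ → E n) → ℝ) : Prop :=
  ∀ (z : E n) (w : ℝ → E n), PCh h w → φ ϑ z w = σ z w

/-- `φ ∈ Φ` is a viscosity solution of the Cauchy problem. -/
def IsViscositySol (t0 ϑ h : ℝ) (U : Set (E l)) (V : Set (E m))
    (f : ℝ → E n → (ℝ → E n) → E l → E m → E n)
    (f0 : ℝ → E n → (ℝ → E n) → E l → E m → ℝ) (σ : E n → (ℝ → E n) → ℝ)
    (φ : ℝ → E n → (ℝ → E n) → ℝ) : Prop :=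
  InPhi t0 ϑ h φ ∧ TerminalCond ϑ h σ φ ∧
  (∀ τ ∈ Ico t0 ϑ, ∀ (z : E n) (w : ℝ → E n), PCh h w →
    ∀ ψ : ℝ × E n → ℝ, ContDiff ℝ 1 ψ → ∀ δ > (0 : ℝ),
      (∀ p ∈ Oplus δ τ z, φ τ z w - ψ (τ, z) ≤ φ p.1 p.2 (seg (ext0 τ z w) p.1) - ψ p) →
      deriv (fun t => ψ (t, z)) τ +
        Ham U V f f0 τ z w (gradient (fun x => ψ (τ, x)) z) ≤ 0) ∧
  (∀ τ ∈ Ico t0 ϑ, ∀ (z : E n) (w : ℝ → E n), PCh h w →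
    ∀ ψ : ℝ × E n → ℝ, ContDiff ℝ 1 ψ → ∀ δ > (0 : ℝ),
      (∀ p ∈ Oplus δ τ z, φ p.1 p.2 (seg (ext0 τ z w) p.1) - ψ p ≤ φ τ z w - ψ (τ, z)) →
      0 ≤ deriv (fun t => ψ (t, z)) τ +
        Ham U V f f0 τ z w (gradient (fun x => ψ (τ, x)) z))

/-- `φ` has ci-derivatives `(c, g)` at `(τ,z,w(·))`. -/
def HasCiDerivAt (ϑ h : ℝ) (φ : ℝ → E n → (ℝ → E n) → ℝ) (c : ℝ) (g : E n)
    (τ : ℝ) (z : E n) (w : ℝ → E n) : Prop :=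
  ∀ y ∈ Lam ϑ h τ z w,
    (fun p : ℝ × E n => φ p.1 p.2 (seg y p.1) - φ τ z w - (p.1 - τ) * c - ⟪p.2 - z, g⟫)
      =o[𝓝[Icc τ ϑ ×ˢ (univ : Set (E n))] ((τ, z) : ℝ × E n)]
        fun p : ℝ × E n => |p.1 - τ| + ‖p.2 - z‖

/-- the subdifferential `D⁻φ(τ,z,w(·))`. -/
def Dminus (φ : ℝ → E n → (ℝ → E n) → ℝ) (τ : ℝ) (z : E n) (w : ℝ → E n) : Set (ℝ × E n) :=
  {p | ∀ ε > (0 : ℝ), ∃ δ > (0 : ℝ), ∀ q ∈ Oplus δ τ z, q ≠ ((τ, z) : ℝ × E n) →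
    -ε ≤ (φ q.1 q.2 (seg (ext0 τ z w) q.1) - φ τ z w - (q.1 - τ) * p.1 - ⟪q.2 - z, p.2⟫) /
      (|q.1 - τ| + ‖q.2 - z‖)}

/-- the superdifferential `D⁺φ(τ,z,w(·))`. -/
def Dplus (φ : ℝ → E n → (ℝ → E n) → ℝ) (τ : ℝ) (z : E n) (w : ℝ → E n) : Set (ℝ × E n) :=
  {q | ∀ ε > (0 : ℝ), ∃ δ > (0 : ℝ), ∀ p ∈ Oplus δ τ z, p ≠ ((τ, z) : ℝ × E n) →
    (φ p.1 p.2 (seg (ext0 τ z w) p.1) - φ τ z w - (p.1 - τ) * q.1 - ⟪p.2 - z, q.2⟫) /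
      (|p.1 - τ| + ‖p.2 - z‖) ≤ ε}

/-- the lower right directional derivative `∂⁻_{(l0,l)} φ(τ,z,w(·))`. -/
def lowerDirDeriv (φ : ℝ → E n → (ℝ → E n) → ℝ) (τ : ℝ) (z : E n) (w : ℝ → E n)
    (l0 : ℝ) (lv : E n) : ℝ :=
  Filter.liminf
    (fun p : ℝ × (ℝ × E n) =>
      (φ (τ + p.2.1 * p.1) (z + p.1 • p.2.2) (seg (ext0 τ z w) (τ + p.2.1 * p.1)) - φ τ z w) / p.1)
    ((𝓝[>] (0 : ℝ)) ×ˢ 𝓝[Ici (0 : ℝ) ×ˢ (univ : Set (E n))] ((l0, lv) : ℝ × E n))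

/-- the upper right directional derivative `∂⁺_{(l0,l)} φ(τ,z,w(·))`. -/
def upperDirDeriv (φ : ℝ → E n → (ℝ → E n) → ℝ) (τ : ℝ) (z : E n) (w : ℝ → E n)
    (l0 : ℝ) (lv : E n) : ℝ :=
  Filter.limsup
    (fun p : ℝ × (ℝ × E n) =>
      (φ (τ + p.2.1 * p.1) (z + p.1 • p.2.2) (seg (ext0 τ z w) (τ + p.2.1 * p.1)) - φ τ z w) / p.1)
    ((𝓝[>] (0 : ℝ)) ×ˢ 𝓝[Ici (0 : ℝ) ×ˢ (univ : Set (E n))] ((l0, lv) : ℝ × E n))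

/-- the stability (u- and v-stability) property of a functional. -/
def IsStable (t0 ϑ h : ℝ) (U : Set (E l)) (V : Set (E m))
    (f0 : ℝ → E n → (ℝ → E n) → E l → E m → ℝ)
    (X : ℝ → E n → (ℝ → E n) → (ℝ → E l) → (ℝ → E m) → ℝ → E n)
    (φ : ℝ → E n → (ℝ → E n) → ℝ) : Prop :=
  ∀ τ ∈ Icc t0 ϑ, ∀ (z : E n) (w : ℝ → E n), PCh h w → ∀ t ∈ Icc τ ϑ,
    (⨆ v : Ctrl ϑ τ V, ⨅ u : Ctrl ϑ τ U,
        (φ t (X τ z w u.1 v.1 t) (seg (X τ z w u.1 v.1) t) +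
          ∫ ξ in τ..t, f0 ξ (X τ z w u.1 v.1 ξ) (seg (X τ z w u.1 v.1) ξ) (u.1 ξ) (v.1 ξ)))
      ≤ φ τ z w ∧
    φ τ z w ≤
      ⨅ u : Ctrl ϑ τ U, ⨆ v : Ctrl ϑ τ V,
        (φ t (X τ z w u.1 v.1 t) (seg (X τ z w u.1 v.1) t) +
          ∫ ξ in τ..t, f0 ξ (X τ z w u.1 v.1 ξ) (seg (X τ z w u.1 v.1) ξ) (u.1 ξ) (v.1 ξ))

end DGPaper

/-!
(ii) ⇒ (i): if `φ - ψ` attains a local minimum at `(τ,z)` over `O⁺_δ(τ,z)`, the first-order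
expansion of `ψ` shows that `(∂ψ/∂τ, ∇_z ψ)` lies in `D⁻φ(τ,z,w(·))`.

(i) ⇒ (ii): conversely, an element `(p₀,p)` of `D⁻φ` means that
`φ(t,x,κ_t) - φ(τ,z,w) - (t-τ)p₀ - ⟨x-z,p⟩ ≥ -o(‖(t-τ,x-z)‖)`. The error is dominated by
`g(|t-τ|) + g(‖x-z‖)` for a `C¹` function `g` with `g(0) = g'(0) = 0`, obtained by taking the
monotone envelope `θ` of the error quotient and integrating twice (`g(s) = ∫₀^{2s} θ̃`, where
`θ̃(u) = u⁻¹∫_u^{2u} θ` is a continuous majorant of `θ`). Then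
`ψ(t,x) = (t-τ)p₀ + ⟨x-z,p⟩ - g(|t-τ|) - g(‖x-z‖)` is a `C¹` test function touching `φ` from
below at `(τ,z)`, with derivatives `(p₀,p)` there. At the point `(τ,z)` itself one needs
`φ(τ,z,κ_τ) = φ(τ,z,w)`, which holds because `κ_τ = w` on `[-h,0)` and `φ` is Lipschitz in
`‖·‖₁`.
-/

section Modulus

theorem sub_mul_le_intervalIntegral {f : ℝ → ℝ} {a b c : ℝ} (hab : a ≤ b)
    (hf : IntervalIntegrable f volume a b) (hc : ∀ u ∈ Icc a b, c ≤ f u) :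
    (b - a) * c ≤ ∫ u in a..b, f u := by
  simpa using intervalIntegral.integral_mono_on hab intervalIntegrable_const hf hc

theorem intervalIntegral_le_sub_mul {f : ℝ → ℝ} {a b c : ℝ} (hab : a ≤ b)
    (hf : IntervalIntegrable f volume a b) (hc : ∀ u ∈ Icc a b, f u ≤ c) :
    ∫ u in a..b, f u ≤ (b - a) * c := by
  simpa using intervalIntegral.integral_mono_on hab hf intervalIntegrable_const hc

theorem exists_monotone_modulus {X : Type*} (r e : X → ℝ) (hbdd : BddAbove (range e))
    (he : ∀ ε > 0, ∃ δ > 0, ∀ x, r x ≤ δ → e x ≤ ε) :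
    ∃ θ : ℝ → ℝ, Monotone θ ∧ (∀ s, 0 ≤ θ s) ∧ (∀ ε > 0, ∃ δ > 0, ∀ s ≤ δ, θ s ≤ ε) ∧
      ∀ x, e x ≤ θ (r x) := by
  set A : ℝ → Set ℝ := fun s => insert 0 (e '' {x | r x ≤ s})
  have hA : ∀ s, BddAbove (A s) := fun s => (hbdd.mono (image_subset_range _ _)).insert 0
  refine ⟨fun s => sSup (A s), fun s t hst => ?_, fun s => le_csSup (hA s) (mem_insert _ _),
    fun ε hε => ?_, fun x => le_csSup (hA _) (mem_insert_of_mem _ ⟨x, le_refl (r x), rfl⟩)⟩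
  · exact csSup_le_csSup (hA t) (insert_nonempty _ _)
      (insert_subset_insert (image_mono fun x hx => le_trans hx hst))
  · obtain ⟨δ, hδ, hle⟩ := he ε hε
    refine ⟨δ, hδ, fun s hs => csSup_le (insert_nonempty _ _) ?_⟩
    rintro _ (rfl | ⟨x, hx, rfl⟩)
    · exact hε.le
    · exact hle x (le_trans hx hs)

theorem exists_continuous_majorant {θ : ℝ → ℝ} (hmono : Monotone θ) (hnn : ∀ s, 0 ≤ θ s)
    (hθ : ∀ ε > 0, ∃ δ > 0, ∀ s ≤ δ, θ s ≤ ε) :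
    ∃ θ' : ℝ → ℝ, Continuous θ' ∧ θ' 0 = 0 ∧ (∀ s, 0 ≤ θ' s) ∧ ∀ s, 0 < s → θ s ≤ θ' s := by
  have hint : ∀ a b, IntervalIntegrable θ volume a b := fun _ _ => hmono.intervalIntegrable
  set θ' : ℝ → ℝ := fun s => if 0 < s then s⁻¹ * ∫ u in s..2 * s, θ u else 0
  have hlow : ∀ s, 0 < s → θ s ≤ θ' s := fun s hs => by
    have := sub_mul_le_intervalIntegral (by linarith) (hint s (2 * s)) fun u hu => hmono hu.1
    simp only [θ', if_pos hs]
    rw [le_inv_mul_iff₀ hs]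
    linarith
  have hup : ∀ s, 0 < s → θ' s ≤ θ (2 * s) := fun s hs => by
    have := intervalIntegral_le_sub_mul (by linarith) (hint s (2 * s)) fun u hu => hmono hu.2
    simp only [θ', if_pos hs]
    rw [inv_mul_le_iff₀ hs]
    linarith
  have hnn' : ∀ s, 0 ≤ θ' s := fun s => by
    by_cases hs : 0 < s
    · exact (hnn s).trans (hlow s hs)
    · simp [θ', hs]
  have hzero : θ' 0 = 0 := by simp [θ']
  refine ⟨θ', continuous_iff_continuousAt.2 fun s₀ => ?_, hzero, hnn', hlow⟩
  rcases lt_trichotomy s₀ 0 with hs₀ | rfl | hs₀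
  · refine continuousAt_const.congr (f := fun _ => (0 : ℝ)) ?_
    filter_upwards [eventually_lt_nhds hs₀] with s hs
    simp [θ', not_lt.2 hs.le]
  · refine Metric.tendsto_nhds.2 fun ε hε => ?_
    obtain ⟨δ, hδ, hle⟩ := hθ (ε / 2) (half_pos hε)
    filter_upwards [Metric.ball_mem_nhds (0 : ℝ) (half_pos hδ)] with s hs
    rw [hzero, Real.dist_eq, sub_zero, abs_of_nonneg (hnn' s)]
    by_cases hpos : 0 < s
    · rw [Metric.mem_ball, Real.dist_eq, sub_zero, abs_of_pos hpos] at hs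
      linarith [hup s hpos, hle (2 * s) (by linarith)]
    · simpa [θ', hpos] using hε
  · have hP := intervalIntegral.continuous_primitive hint 0
    have hcont : ContinuousAt
        (fun s => s⁻¹ * ((∫ u in 0..2 * s, θ u) - ∫ u in 0..s, θ u)) s₀ :=
      (continuousAt_inv₀ hs₀.ne').mul
        ((hP.comp (continuous_const.mul continuous_id)).sub hP).continuousAt
    refine hcont.congr ?_
    filter_upwards [eventually_gt_nhds hs₀] with s hs
    simp [θ', hs, intervalIntegral.integral_interval_sub_left (hint 0 (2 * s)) (hint 0 s)]

theorem exists_contDiff_one_ge_mul_of_monotone {θ : ℝ → ℝ} (hmono : Monotone θ)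
    (hnn : ∀ s, 0 ≤ θ s) (hθ : ∀ ε > 0, ∃ δ > 0, ∀ s ≤ δ, θ s ≤ ε) :
    ∃ g : ℝ → ℝ, ContDiff ℝ 1 g ∧ g 0 = 0 ∧ deriv g 0 = 0 ∧ ∀ s, 0 ≤ s → s * θ s ≤ g s := by
  obtain ⟨θ', hcont, hzero, hnn', hle⟩ := exists_continuous_majorant hmono hnn hθ
  set g : ℝ → ℝ := fun s => ∫ u in 0..2 * s, θ' u
  have hderiv : ∀ s, HasDerivAt g (2 * θ' (2 * s)) s := fun s =>
    ((hcont.integral_hasStrictDerivAt 0 (2 * s)).hasDerivAt.comp s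
      ((hasDerivAt_id s).const_mul 2)).congr_deriv (by ring)
  have hg : deriv g = fun s => 2 * θ' (2 * s) := deriv_eq hderiv
  refine ⟨g, contDiff_one_iff_deriv.2 ⟨fun s => (hderiv s).differentiableAt, ?_⟩,
    by simp [g], by simp [hg, hzero], fun s hs => ?_⟩
  · rw [hg]; fun_prop
  rcases hs.eq_or_lt with rfl | hs
  · simp [g]
  have hint : ∀ a b, IntervalIntegrable θ' volume a b := hcont.intervalIntegrable
  have hfirst : 0 ≤ ∫ u in 0..s, θ' u := intervalIntegral.integral_nonneg hs.le fun u _ => hnn' u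
  have hsecond := sub_mul_le_intervalIntegral (c := θ s) (by linarith : s ≤ 2 * s)
    (hint s (2 * s)) fun u hu => (hmono hu.1).trans (hle u (hs.trans_le hu.1))
  simp only [g, ← intervalIntegral.integral_add_adjacent_intervals (hint 0 s) (hint s (2 * s))]
  linarith

theorem exists_contDiff_one_lower_modulus {X : Type*} [SeminormedAddCommGroup X]
    {N : X → ℝ} {S : Set X} {x₀ : X}
    (hN : ∀ ε > 0, ∃ δ > 0, ∀ x ∈ S, ‖x - x₀‖ ≤ δ → -(ε * ‖x - x₀‖) ≤ N x) :
    ∃ δ > 0, ∃ g : ℝ → ℝ, ContDiff ℝ 1 g ∧ g 0 = 0 ∧ deriv g 0 = 0 ∧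
      (∀ s, 0 ≤ s → 0 ≤ g s) ∧ ∀ x ∈ S, ‖x - x₀‖ ≤ δ → -g ‖x - x₀‖ ≤ N x := by
  obtain ⟨δ₀, hδ₀, hN₀⟩ := hN 1 one_pos
  set B := S ∩ {x | ‖x - x₀‖ ≤ δ₀}
  -- at points with `‖x - x₀‖ = 0` the quotient is the junk value `0`; `hN₀` handles them
  set e : X → ℝ := B.indicator fun x => -N x / ‖x - x₀‖ with he_def
  have he_le : ∀ ε, 0 ≤ ε → ∀ x, (x ∈ B → -N x ≤ ε * ‖x - x₀‖) → e x ≤ ε := fun ε hε x hx => by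
    by_cases hxB : x ∈ B
    · rw [he_def, indicator_of_mem hxB]
      exact div_le_of_le_mul₀ (norm_nonneg _) hε (hx hxB)
    · rwa [he_def, indicator_of_notMem hxB]
  have hbdd : BddAbove (range e) := ⟨1, by
    rintro _ ⟨x, rfl⟩
    exact he_le 1 zero_le_one x fun hx => by linarith [hN₀ x hx.1 hx.2]⟩
  have he : ∀ ε > 0, ∃ δ > 0, ∀ x, ‖x - x₀‖ ≤ δ → e x ≤ ε := fun ε hε => by
    obtain ⟨δ, hδ, hNε⟩ := hN ε hε
    refine ⟨min δ δ₀, lt_min hδ hδ₀, fun x hx => he_le ε hε.le x fun hxB => ?_⟩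
    linarith [hNε x hxB.1 (hx.trans (min_le_left _ _))]
  obtain ⟨θ, hmono, hnn, hθ, heθ⟩ := exists_monotone_modulus (fun x => ‖x - x₀‖) e hbdd he
  obtain ⟨g, hg, hg0, hg', hgθ⟩ := exists_contDiff_one_ge_mul_of_monotone hmono hnn hθ
  refine ⟨δ₀, hδ₀, g, hg, hg0, hg', fun s hs => (mul_nonneg hs (hnn s)).trans (hgθ s hs),
    fun x hxS hx => ?_⟩
  have key : ‖x - x₀‖ * e x ≤ g ‖x - x₀‖ :=
    (mul_le_mul_of_nonneg_left (heθ x) (norm_nonneg _)).trans (hgθ _ (norm_nonneg _))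
  rcases (norm_nonneg (x - x₀)).eq_or_lt with h0 | hpos
  · have := hN₀ x hxS hx
    rw [← h0] at this ⊢
    linarith
  · rw [he_def, indicator_of_mem (show x ∈ B from ⟨hxS, hx⟩), mul_div_cancel₀ _ hpos.ne'] at key
    linarith

end Modulus

section NormComposition

variable {F : Type*} [NormedAddCommGroup F]

theorem hasFDerivAt_comp_norm_zero [NormedSpace ℝ F] {g : ℝ → ℝ} (hg : HasDerivAt g 0 0) :
    HasFDerivAt (fun x : F => g ‖x‖) (0 : F →L[ℝ] ℝ) 0 := by
  have h := (hasDerivAt_iff_isLittleO_nhds_zero.1 hg).comp_tendsto (tendsto_norm_zero (E := F))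
  rw [hasFDerivAt_iff_isLittleO_nhds_zero, ← isLittleO_norm_right]
  simpa [Function.comp_def] using h

theorem contDiff_one_comp_norm [InnerProductSpace ℝ F] {g : ℝ → ℝ} (hg : ContDiff ℝ 1 g)
    (hg0 : deriv g 0 = 0) : ContDiff ℝ 1 (fun x : F => g ‖x‖) := by
  have hgd : ∀ s, HasDerivAt g (deriv g s) s := fun s =>
    ((hg.differentiable one_ne_zero) s).hasDerivAt
  refine contDiff_one_iff_hasFDerivAt.2
    ⟨fun x => deriv g ‖x‖ • fderiv ℝ (fun y : F => ‖y‖) x, ?_, fun x => ?_⟩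
  · refine continuous_iff_continuousAt.2 fun x => ?_
    rcases eq_or_ne x 0 with rfl | hx
    · have hbound : ∀ y : F, ‖deriv g ‖y‖ • fderiv ℝ (fun y : F => ‖y‖) y‖ ≤ |deriv g ‖y‖| :=
        fun y => by
          rw [norm_smul, Real.norm_eq_abs]
          exact mul_le_of_le_one_right (abs_nonneg _)
            (by simpa using norm_fderiv_le_of_lipschitz ℝ (x₀ := y) lipschitzWith_one_norm)
      have hlim : Tendsto (fun y : F => |deriv g ‖y‖|) (𝓝 0) (𝓝 0) := by
        simpa [hg0] using ((hg.continuous_deriv le_rfl).comp continuous_norm).abs.tendsto (0 : F)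
      simpa [ContinuousAt, hg0] using squeeze_zero_norm hbound hlim
    · exact ((hg.continuous_deriv le_rfl).comp continuous_norm).continuousAt.smul
        ((contDiffAt_norm ℝ hx (n := 1)).continuousAt_fderiv one_ne_zero)
  · rcases eq_or_ne x 0 with rfl | hx
    · simpa [hg0] using hasFDerivAt_comp_norm_zero (F := F) ((hgd 0).congr_deriv hg0)
    · exact (hgd ‖x‖).comp_hasFDerivAt x
        ((contDiffAt_norm ℝ hx (n := 1)).differentiableAt one_ne_zero).hasFDerivAt

end NormComposition

section PartialDerivatives

variable {F : Type*} [NormedAddCommGroup F] [InnerProductSpace ℝ F]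

theorem HasFDerivAt.apply_eq_mul_deriv_add_inner_gradient [CompleteSpace F] {ψ : ℝ × F → ℝ}
    {L : ℝ × F →L[ℝ] ℝ} {τ : ℝ} {z : F} (hψ : HasFDerivAt ψ L (τ, z)) (v : ℝ × F) :
    L v = v.1 * deriv (fun t => ψ (t, z)) τ + ⟪v.2, gradient (fun x => ψ (τ, x)) z⟫ := by
  have ht : deriv (fun t => ψ (t, z)) τ = L (1, 0) :=
    (hψ.comp_hasDerivAt τ ((hasDerivAt_id τ).prodMk (hasDerivAt_const τ z))).deriv
  have hx : gradient (fun x => ψ (τ, x)) z =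
      (InnerProductSpace.toDual ℝ F).symm (L.comp (ContinuousLinearMap.inr ℝ ℝ F)) :=
    (hψ.comp z (hasFDerivAt_prodMk_right τ z)).hasGradientAt.gradient
  rw [ht, hx, real_inner_comm, InnerProductSpace.toDual_symm_apply]
  calc L v = L (v.1 • (1, 0) + (0, v.2)) := by congr 1; ext <;> simp
    _ = v.1 * L (1, 0) + L (0, v.2) := by rw [map_add, map_smul, smul_eq_mul]

def testFn (g : ℝ → ℝ) (τ : ℝ) (z : F) (p₀ : ℝ) (p : F) (q : ℝ × F) : ℝ :=
  (q.1 - τ) * p₀ + ⟪q.2 - z, p⟫ - (g ‖q.1 - τ‖ + g ‖q.2 - z‖)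

theorem testFn_self {g : ℝ → ℝ} (hg0 : g 0 = 0) (τ : ℝ) (z : F) (p₀ : ℝ) (p : F) :
    testFn g τ z p₀ p (τ, z) = 0 := by
  simp [testFn, hg0]

theorem contDiff_testFn {g : ℝ → ℝ} (hg : ContDiff ℝ 1 g) (hg0 : deriv g 0 = 0) (τ : ℝ) (z : F)
    (p₀ : ℝ) (p : F) : ContDiff ℝ 1 (testFn g τ z p₀ p) := by
  have hg₁ : ContDiff ℝ 1 fun q : ℝ × F => g ‖q.1 - τ‖ :=
    (contDiff_one_comp_norm hg hg0).comp (contDiff_fst.sub contDiff_const)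
  have hg₂ : ContDiff ℝ 1 fun q : ℝ × F => g ‖q.2 - z‖ :=
    (contDiff_one_comp_norm hg hg0).comp (contDiff_snd.sub contDiff_const)
  exact (((contDiff_fst.sub contDiff_const).mul contDiff_const).add
    ((contDiff_snd.sub contDiff_const).inner ℝ contDiff_const)).sub (hg₁.add hg₂)

theorem deriv_gradient_testFn [CompleteSpace F] {g : ℝ → ℝ} (hg : HasDerivAt g 0 0) (τ : ℝ)
    (z : F) (p₀ : ℝ) (p : F) :
    deriv (fun t => testFn g τ z p₀ p (t, z)) τ = p₀ ∧
      gradient (fun x => testFn g τ z p₀ p (τ, x)) z = p := by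
  have hg₁ : HasFDerivAt (fun x : ℝ => g ‖x‖) (0 : ℝ →L[ℝ] ℝ) (τ - τ) := by
    rw [sub_self]; exact hasFDerivAt_comp_norm_zero hg
  have hg₂ : HasFDerivAt (fun x : F => g ‖x‖) (0 : F →L[ℝ] ℝ) (z - z) := by
    rw [sub_self]; exact hasFDerivAt_comp_norm_zero hg
  have hfst : HasFDerivAt (fun q : ℝ × F => q.1 - τ) (ContinuousLinearMap.fst ℝ ℝ F) (τ, z) :=
    hasFDerivAt_fst.sub_const τ
  have hsnd : HasFDerivAt (fun q : ℝ × F => q.2 - z) (ContinuousLinearMap.snd ℝ ℝ F) (τ, z) :=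
    hasFDerivAt_snd.sub_const z
  have hG₁ : HasFDerivAt (fun q : ℝ × F => g ‖q.1 - τ‖)
      ((0 : ℝ →L[ℝ] ℝ).comp (ContinuousLinearMap.fst ℝ ℝ F)) (τ, z) :=
    (hg₁.comp (τ, z) hfst :)
  have hG₂ : HasFDerivAt (fun q : ℝ × F => g ‖q.2 - z‖)
      ((0 : F →L[ℝ] ℝ).comp (ContinuousLinearMap.snd ℝ ℝ F)) (τ, z) :=
    (hg₂.comp (τ, z) hsnd :)
  obtain ⟨L, hψ, hL⟩ : ∃ L : ℝ × F →L[ℝ] ℝ, HasFDerivAt (testFn g τ z p₀ p) L (τ, z) ∧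
      ∀ v, L v = v.1 * p₀ + ⟪v.2, p⟫ :=
    ⟨_, ((hfst.mul_const p₀).add (hsnd.inner ℝ (hasFDerivAt_const p _))).sub (hG₁.add hG₂),
      fun v => by simp [mul_comm]⟩
  have key := fun v => (hψ.apply_eq_mul_deriv_add_inner_gradient v).symm.trans (hL v)
  constructor
  · simpa using key (1, 0)
  · exact ext_inner_left ℝ fun v => by simpa using key (0, v)

end PartialDerivatives

section ProdNorm

variable {F : Type*} [NormedAddCommGroup F]

theorem norm_sub_mk_eq_max (q : ℝ × F) (τ : ℝ) (z : F) :
    ‖q - (τ, z)‖ = max |q.1 - τ| ‖q.2 - z‖ :=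
  Prod.norm_def _

theorem norm_sub_mk_le_abs_add_norm (q : ℝ × F) (τ : ℝ) (z : F) :
    ‖q - (τ, z)‖ ≤ |q.1 - τ| + ‖q.2 - z‖ :=
  (norm_sub_mk_eq_max q τ z).trans_le (max_le_add_of_nonneg (abs_nonneg _) (norm_nonneg _))

theorem abs_add_norm_le_two_mul_norm_sub_mk (q : ℝ × F) (τ : ℝ) (z : F) :
    |q.1 - τ| + ‖q.2 - z‖ ≤ 2 * ‖q - (τ, z)‖ := by
  rw [norm_sub_mk_eq_max]
  linarith [le_max_left |q.1 - τ| ‖q.2 - z‖, le_max_right |q.1 - τ| ‖q.2 - z‖]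

theorem abs_add_norm_sub_pos {q : ℝ × F} {τ : ℝ} {z : F} (hq : q ≠ (τ, z)) :
    0 < |q.1 - τ| + ‖q.2 - z‖ :=
  (norm_pos_iff.2 (sub_ne_zero.2 hq)).trans_le (norm_sub_mk_le_abs_add_norm q τ z)

end ProdNorm

namespace DGPaper

theorem PCOn.congr {n : ℕ} {x y : ℝ → E n} {a b : ℝ} (hx : PCOn x a b)
    (hxy : EqOn y x (Ico a b)) : PCOn y a b := by
  obtain ⟨k, ξ, hξ, h0, hlast, hi⟩ := hx
  refine ⟨k, ξ, hξ, h0, hlast, fun i => ?_⟩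
  have hsub : Ico (ξ i.castSucc) (ξ i.succ) ⊆ Ico a b :=
    Ico_subset_Ico (h0 ▸ hξ.monotone (Fin.zero_le _)) (hlast ▸ hξ.monotone (Fin.le_last _))
  obtain ⟨hcont, L, hL⟩ := hi i
  refine ⟨hcont.congr (hxy.mono hsub), L, hL.congr' ?_⟩
  filter_upwards [Ioo_mem_nhdsLT (hξ (Fin.castSucc_lt_succ (i := i)))] with t ht
  exact (hxy (hsub ⟨ht.1.le, ht.2⟩)).symm

theorem normInf_congr {n : ℕ} {h : ℝ} {w w' : ℝ → E n} (hww : EqOn w w' (Ico (-h) 0)) :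
    normInf h w = normInf h w' := by
  rw [normInf, normInf, image_congr fun ξ hξ => by rw [hww hξ]]

theorem norm1_sub_eq_zero {n : ℕ} {h : ℝ} {w w' : ℝ → E n} (hh : 0 ≤ h)
    (hww : EqOn w w' (Ico (-h) 0)) : norm1 h (fun ξ => w ξ - w' ξ) = 0 := by
  rw [norm1, intervalIntegral.integral_of_le (by linarith), integral_Ioc_eq_integral_Ioo,
    setIntegral_congr_fun (g := fun _ => (0 : ℝ)) measurableSet_Ioo fun ξ hξ => by simp [hww (Ioo_subset_Ico_self hξ)]]
  exact integral_zero _ _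

theorem InPhi.apply_eq_of_eqOn {n : ℕ} {t0 ϑ h τ : ℝ} {φ : ℝ → E n → (ℝ → E n) → ℝ}
    {z : E n} {w w' : ℝ → E n} (hφ : InPhi t0 ϑ h φ) (hh : 0 ≤ h) (hτ : τ ∈ Icc t0 ϑ)
    (hw : PCh h w) (hww : EqOn w' w (Ico (-h) 0)) : φ τ z w' = φ τ z w := by
  set α := 1 + max ‖z‖ (normInf h w)
  have hz : ‖z‖ + 1 ≤ α := by linarith [le_max_left ‖z‖ (normInf h w)]
  have hwα : normInf h w ≤ α := by linarith [le_max_right ‖z‖ (normInf h w)]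
  obtain ⟨L, -, hL⟩ := hφ.2 α (by linarith [norm_nonneg z])
  have hmem : memP h α z w := ⟨hw, by linarith, hwα⟩
  have hmem' : memP h α z w' := ⟨PCOn.congr hw hww, by linarith, (normInf_congr hww).trans_le hwα⟩
  have hle := hL τ hτ z z w' w hmem' hmem
  rw [sub_self, norm_zero, norm1_sub_eq_zero hh hww, add_zero, mul_zero] at hle
  exact sub_eq_zero.1 (abs_nonpos_iff.1 hle)

theorem seg_ext0_self_eqOn {n : ℕ} (τ : ℝ) (z : E n) (w : ℝ → E n) :
    EqOn (seg (ext0 τ z w) τ) w (Iio 0) := fun ξ hξ => by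
  simp [seg, ext0, show τ + ξ < τ by linarith [mem_Iio.1 hξ]]

theorem mem_Oplus_iff {n : ℕ} {δ τ : ℝ} {z : E n} {q : ℝ × E n} :
    q ∈ Oplus δ τ z ↔ τ ≤ q.1 ∧ ‖q - (τ, z)‖ ≤ δ := by
  rw [norm_sub_mk_eq_max]
  simp only [Oplus, mem_ofPred_eq, mem_Icc, max_le_iff, abs_le]
  constructor
  · rintro ⟨⟨h1, h2⟩, h3⟩
    exact ⟨h1, ⟨by linarith [norm_nonneg (q.2 - z)], by linarith⟩, h3⟩
  · rintro ⟨h1, ⟨-, h2⟩, h3⟩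
    exact ⟨⟨h1, by linarith⟩, h3⟩

theorem mem_Dminus_iff {n : ℕ} {φ : ℝ → E n → (ℝ → E n) → ℝ} {τ : ℝ} {z : E n}
    {w : ℝ → E n} {p : ℝ × E n} :
    p ∈ Dminus φ τ z w ↔ ∀ ε > 0, ∃ δ > 0, ∀ q ∈ Oplus δ τ z, q ≠ (τ, z) →
      -(ε * (|q.1 - τ| + ‖q.2 - z‖)) ≤
        φ q.1 q.2 (seg (ext0 τ z w) q.1) - φ τ z w - (q.1 - τ) * p.1 - ⟪q.2 - z, p.2⟫ := by
  refine forall₂_congr fun ε _ => exists_congr fun δ => and_congr_right fun _ =>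
    forall₂_congr fun q _ => imp_congr_right fun hq => ?_
  rw [le_div_iff₀ (abs_add_norm_sub_pos hq), neg_mul]

theorem mem_Dminus_of_forall_le {n : ℕ} {φ : ℝ → E n → (ℝ → E n) → ℝ} {τ δ : ℝ} {z : E n}
    {w : ℝ → E n} {ψ : ℝ × E n → ℝ} (hψ : DifferentiableAt ℝ ψ (τ, z)) (hδ : 0 < δ)
    (hmin : ∀ q ∈ Oplus δ τ z,
      φ τ z w - ψ (τ, z) ≤ φ q.1 q.2 (seg (ext0 τ z w) q.1) - ψ q) :
    (deriv (fun t => ψ (t, z)) τ, gradient (fun x => ψ (τ, x)) z) ∈ Dminus φ τ z w := by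
  rw [mem_Dminus_iff]
  intro ε hε
  obtain ⟨δ₁, hδ₁, hclose⟩ :=
    Metric.eventually_nhds_iff.1 (hψ.hasFDerivAt.isLittleO.def hε)
  refine ⟨min δ (δ₁ / 2), lt_min hδ (half_pos hδ₁), fun q hq _ => ?_⟩
  obtain ⟨hq₁, hqδ⟩ := mem_Oplus_iff.1 hq
  have hexp := hclose (y := q) (by
    rw [dist_eq_norm]; linarith [min_le_right δ (δ₁ / 2)])
  have hψq := hmin q (mem_Oplus_iff.2 ⟨hq₁, hqδ.trans (min_le_left _ _)⟩)
  have hL := hψ.hasFDerivAt.apply_eq_mul_deriv_add_inner_gradient (q - (τ, z))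
  simp only [Prod.fst_sub, Prod.snd_sub, Real.norm_eq_abs] at hL hexp
  linarith [(abs_le.1 hexp).1,
    mul_le_mul_of_nonneg_left (norm_sub_mk_le_abs_add_norm q τ z) hε.le]

theorem exists_testFn_of_mem_Dminus {n : ℕ} {φ : ℝ → E n → (ℝ → E n) → ℝ} {τ : ℝ} {z : E n}
    {w : ℝ → E n} {p : ℝ × E n} (hp : p ∈ Dminus φ τ z w)
    (hself : φ τ z w ≤ φ τ z (seg (ext0 τ z w) τ)) :
    ∃ ψ : ℝ × E n → ℝ, ContDiff ℝ 1 ψ ∧ deriv (fun t => ψ (t, z)) τ = p.1 ∧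
      gradient (fun x => ψ (τ, x)) z = p.2 ∧ ∃ δ > 0, ∀ q ∈ Oplus δ τ z,
        φ τ z w - ψ (τ, z) ≤ φ q.1 q.2 (seg (ext0 τ z w) q.1) - ψ q := by
  rw [mem_Dminus_iff] at hp
  obtain ⟨δ, hδ, g, hg, hg0, hg', hgnn, hgN⟩ :=
    exists_contDiff_one_lower_modulus (S := {q | τ ≤ q.1 ∧ q ≠ (τ, z)}) (x₀ := (τ, z))
      (N := fun q => φ q.1 q.2 (seg (ext0 τ z w) q.1) - φ τ z w - (q.1 - τ) * p.1 -
        ⟪q.2 - z, p.2⟫) fun ε hε => by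
      obtain ⟨δ, hδ, hN⟩ := hp (ε / 2) (half_pos hε)
      refine ⟨δ, hδ, fun q ⟨hq₁, hne⟩ hqδ => ?_⟩
      linarith [hN q (mem_Oplus_iff.2 ⟨hq₁, hqδ⟩) hne, mul_le_mul_of_nonneg_left
        (abs_add_norm_le_two_mul_norm_sub_mk q τ z) (half_pos hε).le]
  obtain ⟨hψt, hψx⟩ := deriv_gradient_testFn
    ((hg.differentiable one_ne_zero 0).hasDerivAt.congr_deriv hg') τ z p.1 p.2
  refine ⟨testFn g τ z p.1 p.2, contDiff_testFn hg hg' τ z p.1 p.2, hψt, hψx, δ, hδ,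
    fun q hq => ?_⟩
  rcases eq_or_ne q (τ, z) with rfl | hne
  · exact sub_le_sub_right hself _
  rw [testFn_self hg0]
  obtain ⟨hq₁, hqδ⟩ := mem_Oplus_iff.1 hq
  have hN := hgN q ⟨hq₁, hne⟩ hqδ
  have hsplit : g ‖q - (τ, z)‖ ≤ g |q.1 - τ| + g ‖q.2 - z‖ := by
    rw [norm_sub_mk_eq_max]
    rcases max_cases |q.1 - τ| ‖q.2 - z‖ with ⟨h, -⟩ | ⟨h, -⟩ <;> rw [h]
    · linarith [hgnn _ (norm_nonneg (q.2 - z))]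
    · linarith [hgnn _ (abs_nonneg (q.1 - τ))]
  simp only [testFn, Real.norm_eq_abs]
  linarith

theorem sub_viscosity_property_iff_subdifferential_inequality_general
    (t0 ϑ h : ℝ) (hh : 0 < h) (n : ℕ)
    (l m : ℕ) (U : Set (E l)) (V : Set (E m))
    (f : ℝ → E n → (ℝ → E n) → E l → E m → E n)
    (f0 : ℝ → E n → (ℝ → E n) → E l → E m → ℝ)
    (φ : ℝ → E n → (ℝ → E n) → ℝ) (hφ : InPhi t0 ϑ h φ) :
    (∀ τ ∈ Ico t0 ϑ, ∀ (z : E n) (w : ℝ → E n), PCh h w →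
        ∀ ψ : ℝ × E n → ℝ, ContDiff ℝ 1 ψ → ∀ δ > (0 : ℝ),
          (∀ p ∈ Oplus δ τ z, φ τ z w - ψ (τ, z) ≤ φ p.1 p.2 (seg (ext0 τ z w) p.1) - ψ p) →
          deriv (fun t => ψ (t, z)) τ +
            Ham U V f f0 τ z w (gradient (fun x => ψ (τ, x)) z) ≤ 0) ↔
    (∀ τ ∈ Ico t0 ϑ, ∀ (z : E n) (w : ℝ → E n), PCh h w →
        ∀ p ∈ Dminus φ τ z w, p.1 + Ham U V f f0 τ z w p.2 ≤ 0) := by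
  constructor
  · intro hvisc τ hτ z w hw p hp
    have hself : φ τ z w ≤ φ τ z (seg (ext0 τ z w) τ) :=
      (hφ.apply_eq_of_eqOn hh.le (Ico_subset_Icc_self hτ) hw
        ((seg_ext0_self_eqOn τ z w).mono fun _ hξ => hξ.2)).ge
    obtain ⟨ψ, hψ, hψt, hψx, δ, hδ, hmin⟩ := exists_testFn_of_mem_Dminus hp hself
    have := hvisc τ hτ z w hw ψ hψ δ hδ hmin
    rwa [hψt, hψx] at this
  · intro hsub τ hτ z w hw ψ hψ δ hδ hmin
    exact hsub τ hτ z w hw _ (mem_Dminus_of_forall_le (hψ.differentiable one_ne_zero _) hδ hmin)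

theorem sub_viscosity_property_iff_subdifferential_inequality
    (t0 ϑ h : ℝ) (hth : t0 < ϑ) (hh : 0 < h) (n : ℕ) (hn : 0 < n)
    (l m : ℕ) (U : Set (E l)) (V : Set (E m))
    (hUc : IsCompact U) (hVc : IsCompact V) (hUne : U.Nonempty) (hVne : V.Nonempty)
    (f : ℝ → E n → (ℝ → E n) → E l → E m → E n)
    (f0 : ℝ → E n → (ℝ → E n) → E l → E m → ℝ)
    (hC1 : CondC1 t0 ϑ h f f0) (hC2 : CondC2 t0 ϑ h U V f f0)
    (hC3 : CondC3 t0 ϑ h U V f f0)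
    (φ : ℝ → E n → (ℝ → E n) → ℝ) (hφ : InPhi t0 ϑ h φ) :
    (∀ τ ∈ Ico t0 ϑ, ∀ (z : E n) (w : ℝ → E n), PCh h w →
        ∀ ψ : ℝ × E n → ℝ, ContDiff ℝ 1 ψ → ∀ δ > (0 : ℝ),
          (∀ p ∈ Oplus δ τ z, φ τ z w - ψ (τ, z) ≤ φ p.1 p.2 (seg (ext0 τ z w) p.1) - ψ p) →
          deriv (fun t => ψ (t, z)) τ +
            Ham U V f f0 τ z w (gradient (fun x => ψ (τ, x)) z) ≤ 0) ↔
    (∀ τ ∈ Ico t0 ϑ, ∀ (z : E n) (w : ℝ → E n), PCh h w →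
        ∀ p ∈ Dminus φ τ z w, p.1 + Ham U V f f0 τ z w p.2 ≤ 0) :=
  sub_viscosity_property_iff_subdifferential_inequality_general t0 ϑ h hh n l m U V f f0 φ hφ

end DGPaper
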